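/- arXiv:2503.24222 — 5 statements merged into one kernel-verified Lean document; each statement's English description precedes it below -/
import Mathlib

section
/- For every mass m > 0 there exists a constant C > 0, depending only on m, such that for every integer dimension d ≥ 1, all vectors a, b ∈ ℝ^d and all signs ι₁, ι₂ ∈ {−1, +1}, the quadratic resonance modulus Δ^{(ι₁,ι₂)}_{a,b} is nonzero and satisfies 1/|Δ^{(ι₁,ι₂)}_{a,b}| ≤ C ⟨a⟩^{1/2} ⟨b⟩^{1/2}. -/
noncomputable section

/-- The Japanese bracket `⟨x⟩ = √(m + |x|²)` on `ℝ^d`. -/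
def jb (m : ℝ) {d : ℕ} (x : EuclideanSpace ℝ (Fin d)) : ℝ :=
  Real.sqrt (m + ‖x‖ ^ 2)

/-- The quadratic resonance modulus `Δ^{(ι₁,ι₂)}_{k₁,k₂} = ⟨k₁+k₂⟩ − ι₁⟨k₁⟩ − ι₂⟨k₂⟩`. -/
def Δ₂ (m : ℝ) {d : ℕ} (ι₁ ι₂ : ℝ) (k₁ k₂ : EuclideanSpace ℝ (Fin d)) : ℝ :=
  jb m (k₁ + k₂) - ι₁ * jb m k₁ - ι₂ * jb m k₂

/-!
The heart is a lower bound on the defect of the triangle inequality for `⟨·⟩`: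
`⟨u⟩ + ⟨v⟩ - ⟨u + v⟩ ≥ m / (4 min(⟨u⟩, ⟨v⟩))`. After replacing `‖u + v‖` by `‖u‖ + ‖v‖` this is an
inequality between three square roots, which follows from
`(⟨u⟩ + ⟨v⟩)² - ⟨u + v⟩² ≥ m + 2(⟨u⟩⟨v⟩ - ‖u‖‖v‖)`. For each choice of signs, `|Δ|` is such a defect
(for `(ι₁, ι₂) = (-1, 1)` with `u = a + b`, `v = -a`) or is at least `⟨a + b⟩ ≥ √m`, which beats the
same bound; finally `min(⟨a⟩, ⟨b⟩) ≤ ⟨a⟩^{1/2} ⟨b⟩^{1/2}`.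
-/

open Real

lemma div_le_sqrt_add_sqrt_sub_sqrt {m x y : ℝ} (hm : 0 < m) (hy : 0 ≤ y) (hyx : y ≤ x) :
    m / (4 * √(m + y ^ 2)) ≤ √(m + x ^ 2) + √(m + y ^ 2) - √(m + (x + y) ^ 2) := by
  have hx : 0 ≤ x := hy.trans hyx
  set p := √(m + x ^ 2)
  set q := √(m + y ^ 2)
  set r := √(m + (x + y) ^ 2)
  have hp2 : p ^ 2 = m + x ^ 2 := sq_sqrt (by positivity)
  have hq2 : q ^ 2 = m + y ^ 2 := sq_sqrt (by positivity)
  have hr2 : r ^ 2 = m + (x + y) ^ 2 := sq_sqrt (by positivity)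
  have hq : 0 < q := sqrt_pos.2 (by positivity)
  have hqp : q ≤ p := sqrt_le_sqrt (by nlinarith)
  have hxp : x ≤ p := le_sqrt_of_sq_le (by linarith)
  have hyq : y ≤ q := le_sqrt_of_sq_le (by linarith)
  have hxy : x * y ≤ p * q := mul_le_mul hxp hyq hy (by linarith)
  -- `(pq - xy)(pq + xy) = m (m + x² + y²) ≥ m p²` and `pq + xy ≤ 2pq`
  have hgap : m * p ≤ 2 * q * (p * q - x * y) := by
    have : m * p ^ 2 ≤ (p * q - x * y) * (2 * (p * q)) := by
      nlinarith [mul_nonneg hx hy]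
    nlinarith
  have hrpq : r ≤ p + q := sqrt_le_iff.mpr ⟨by positivity, by nlinarith⟩
  have hD : (p + q - r) * (p + q + r) = m + 2 * (p * q - x * y) := by
    linear_combination hp2 + hq2 - hr2
  have hDnn : 0 ≤ p + q - r := by linarith
  rw [div_le_iff₀ (by positivity)]
  nlinarith [mul_le_mul_of_nonneg_left (show p + q + r ≤ 4 * p by linarith) hDnn]

variable {m : ℝ} {d : ℕ}

lemma sqrt_le_jb (x : EuclideanSpace ℝ (Fin d)) : √m ≤ jb m x :=
  sqrt_le_sqrt (le_add_of_nonneg_right (by positivity))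

lemma jb_pos (hm : 0 < m) (x : EuclideanSpace ℝ (Fin d)) : 0 < jb m x :=
  (sqrt_pos.2 hm).trans_le (sqrt_le_jb x)

lemma jb_neg (x : EuclideanSpace ℝ (Fin d)) : jb m (-x) = jb m x := by
  simp only [jb, norm_neg]

lemma jb_le_jb_of_norm_le {x y : EuclideanSpace ℝ (Fin d)} (h : ‖x‖ ≤ ‖y‖) :
    jb m x ≤ jb m y := by
  unfold jb; gcongr

lemma div_le_jb_add_jb_sub_jb_add (hm : 0 < m) (u v : EuclideanSpace ℝ (Fin d)) :
    m / (4 * min (jb m u) (jb m v)) ≤ jb m u + jb m v - jb m (u + v) := by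
  wlog hvu : ‖v‖ ≤ ‖u‖ generalizing u v
  · simpa only [min_comm, add_comm, add_comm v u] using this v u (le_of_not_ge hvu)
  have hmin : min (jb m u) (jb m v) = jb m v := min_eq_right (jb_le_jb_of_norm_le hvu)
  have huv : jb m (u + v) ≤ √(m + (‖u‖ + ‖v‖) ^ 2) := by
    unfold jb; gcongr; exact norm_add_le u v
  rw [hmin]
  have := div_le_sqrt_add_sqrt_sub_sqrt hm (norm_nonneg v) hvu
  unfold jb at *
  linarith

lemma div_four_min_jb_le_sqrt (hm : 0 < m) (a b : EuclideanSpace ℝ (Fin d)) :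
    m / (4 * min (jb m a) (jb m b)) ≤ √m := by
  have hs : 0 < √m := sqrt_pos.2 hm
  have hmin : √m ≤ min (jb m a) (jb m b) := le_min (sqrt_le_jb a) (sqrt_le_jb b)
  rw [div_le_iff₀ (by linarith)]
  nlinarith [mul_self_sqrt hm.le]

lemma Δ₂_comm (ι₁ ι₂ : ℝ) (a b : EuclideanSpace ℝ (Fin d)) :
    Δ₂ m ι₁ ι₂ a b = Δ₂ m ι₂ ι₁ b a := by
  simp only [Δ₂, add_comm a b]; ring

lemma div_le_Δ₂_neg_one_one (hm : 0 < m) (a b : EuclideanSpace ℝ (Fin d)) :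
    m / (4 * min (jb m a) (jb m b)) ≤ Δ₂ m (-1) 1 a b := by
  have hΔ : Δ₂ m (-1) 1 a b = jb m (a + b) + jb m (-a) - jb m (a + b + -a) := by
    simp only [Δ₂, jb_neg, add_neg_cancel_comm]; ring
  rcases le_total (jb m a) (jb m b) with hab | hba
  · calc m / (4 * min (jb m a) (jb m b)) ≤ m / (4 * min (jb m (a + b)) (jb m (-a))) := by
          rw [min_eq_left hab, jb_neg]
          gcongr
          · exact mul_pos four_pos (lt_min (jb_pos hm _) (jb_pos hm _))
          · exact min_le_right _ _
      _ ≤ Δ₂ m (-1) 1 a b := hΔ ▸ div_le_jb_add_jb_sub_jb_add hm _ _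
  · calc m / (4 * min (jb m a) (jb m b)) ≤ √m := div_four_min_jb_le_sqrt hm a b
      _ ≤ jb m (a + b) := sqrt_le_jb _
      _ ≤ Δ₂ m (-1) 1 a b := by simp only [Δ₂]; linarith

lemma div_le_abs_Δ₂ (hm : 0 < m) (a b : EuclideanSpace ℝ (Fin d)) {ι₁ ι₂ : ℝ}
    (hι₁ : ι₁ = -1 ∨ ι₁ = 1) (hι₂ : ι₂ = -1 ∨ ι₂ = 1) :
    m / (4 * min (jb m a) (jb m b)) ≤ |Δ₂ m ι₁ ι₂ a b| := by
  rcases hι₁ with rfl | rfl <;> rcases hι₂ with rfl | rfl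
  · calc m / (4 * min (jb m a) (jb m b)) ≤ √m := div_four_min_jb_le_sqrt hm a b
      _ ≤ jb m (a + b) := sqrt_le_jb _
      _ ≤ Δ₂ m (-1) (-1) a b := by simp only [Δ₂]; linarith [jb_pos hm a, jb_pos hm b]
      _ ≤ _ := le_abs_self _
  · exact (div_le_Δ₂_neg_one_one hm a b).trans (le_abs_self _)
  · rw [Δ₂_comm, min_comm]
    exact (div_le_Δ₂_neg_one_one hm b a).trans (le_abs_self _)
  · have hΔ : Δ₂ m 1 1 a b = -(jb m a + jb m b - jb m (a + b)) := by simp only [Δ₂]; ring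
    rw [hΔ, abs_neg]
    exact (div_le_jb_add_jb_sub_jb_add hm a b).trans (le_abs_self _)

lemma min_le_sqrt_mul_sqrt {x y : ℝ} (hx : 0 ≤ x) (hy : 0 ≤ y) : min x y ≤ √x * √y := by
  rw [← sqrt_mul hx, le_sqrt (le_min hx hy) (mul_nonneg hx hy), sq]
  exact mul_le_mul (min_le_left x y) (min_le_right x y) (le_min hx hy) hx

/-- For every mass `m > 0` there is a constant `C > 0`, depending only on `m`, such that in
every dimension `d ≥ 1`, for all `a b ∈ ℝ^d` and signs `ι₁, ι₂ ∈ {−1,+1}`, the quadratic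
resonance modulus is nonzero and `1/|Δ^{(ι₁,ι₂)}_{a,b}| ≤ C ⟨a⟩^{1/2} ⟨b⟩^{1/2}`. -/
theorem stmt0 (m : ℝ) (hm : 0 < m) :
    ∃ C : ℝ, 0 < C ∧ ∀ (d : ℕ), 1 ≤ d →
      ∀ (a b : EuclideanSpace ℝ (Fin d)) (ι₁ ι₂ : ℝ),
        (ι₁ = -1 ∨ ι₁ = 1) → (ι₂ = -1 ∨ ι₂ = 1) →
        Δ₂ m ι₁ ι₂ a b ≠ 0 ∧
        1 / |Δ₂ m ι₁ ι₂ a b| ≤ C * Real.sqrt (jb m a) * Real.sqrt (jb m b) := by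
  refine ⟨4 / m, by positivity, fun d _ a b ι₁ ι₂ hι₁ hι₂ => ?_⟩
  set μ := min (jb m a) (jb m b)
  have hμ : 0 < μ := lt_min (jb_pos hm a) (jb_pos hm b)
  have hlow : m / (4 * μ) ≤ |Δ₂ m ι₁ ι₂ a b| := div_le_abs_Δ₂ hm a b hι₁ hι₂
  have hpos : 0 < |Δ₂ m ι₁ ι₂ a b| := (by positivity : 0 < m / (4 * μ)).trans_le hlow
  refine ⟨abs_pos.mp hpos, ?_⟩
  calc 1 / |Δ₂ m ι₁ ι₂ a b| ≤ 1 / (m / (4 * μ)) := one_div_le_one_div_of_le (by positivity) hlow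
    _ = 4 / m * μ := by field_simp
    _ ≤ 4 / m * √(jb m a) * √(jb m b) := by
      rw [mul_assoc]
      gcongr
      exact min_le_sqrt_mul_sqrt (jb_pos hm a).le (jb_pos hm b).le
end
end

section
/- Let d ≥ 1 be an integer, q > d and m > 0. There exists C > 0, depending only on d, q and m, such that for every L ≥ 1 and every nonnegative C¹ function f : ℝ^d → ℝ that is Lebesgue integrable and satisfies |∇f(x)| ≤ ⟨x⟩^{−q} for all x ∈ ℝ^d, the following two estimates hold: (a) |L^{−d} ∑_{x ∈ ℤ_L^d} f(x) − ∫_{ℝ^d} f| ≤ C L^{−d−1} ∑_{x ∈ ℤ_L^d} sup_{y ∈ C_{x,L}} |∇f(y)|, where C_{x,L} denotes the closed ball of radius 1/(2L) around x for the sup-norm on ℝ^d; (b) ∑_{x ∈ ℤ_L^d} f(x) ≤ C (L^{d−1} + L^d ∫_{ℝ^d} f). -/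
noncomputable section

open MeasureTheory

/-- Membership in the rescaled lattice `ℤ_L^d = (1/L)ℤ^d ⊆ ℝ^d`. -/
def inLattice (L : ℝ) {d : ℕ} (x : EuclideanSpace ℝ (Fin d)) : Prop :=
  ∀ i, ∃ z : ℤ, x i = z / L

/-- The closed sup-norm ball `C_{x,L}` of radius `1/(2L)` around `x`. -/
def cell (L : ℝ) {d : ℕ} (x : EuclideanSpace ℝ (Fin d)) : Set (EuclideanSpace ℝ (Fin d)) :=
  {y | ∀ i, |y i - x i| ≤ 1 / (2 * L)}

namespace Stmt8Aux

/-- half-open cell -/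
def cell' (L : ℝ) {d : ℕ} (x : EuclideanSpace ℝ (Fin d)) : Set (EuclideanSpace ℝ (Fin d)) :=
  {y | ∀ i, x i - 1 / (2 * L) ≤ y i ∧ y i < x i + 1 / (2 * L)}

variable {d : ℕ} {L : ℝ}

lemma cell'_subset_cell (x : EuclideanSpace ℝ (Fin d)) : cell' L x ⊆ cell L x := by
  intro y hy i
  rcases hy i with ⟨h1, h2⟩
  rw [abs_le]
  constructor <;> linarith

lemma mem_cell_self (hL : 0 < L) (x : EuclideanSpace ℝ (Fin d)) : x ∈ cell L x := by
  intro i; simp only [sub_self, abs_zero]; positivity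

lemma cell'_eq_preimage (x : EuclideanSpace ℝ (Fin d)) :
    cell' L x = (MeasurableEquiv.toLp 2 (Fin d → ℝ)).symm ⁻¹'
      (Set.univ.pi fun i => Set.Ico (x i - 1 / (2 * L)) (x i + 1 / (2 * L))) := by
  ext y
  simp only [cell', Set.mem_setOf_eq, Set.mem_preimage, Set.mem_pi, Set.mem_univ, true_implies,
    Set.mem_Ico]
  rfl

lemma measurableSet_cell' (x : EuclideanSpace ℝ (Fin d)) : MeasurableSet (cell' L x) := by
  rw [cell'_eq_preimage]
  exact (MeasurableEquiv.toLp 2 (Fin d → ℝ)).symm.measurable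
    (MeasurableSet.univ_pi fun i => measurableSet_Ico)

lemma volume_cell' (hL : 0 < L) (x : EuclideanSpace ℝ (Fin d)) :
    volume (cell' L x) = ENNReal.ofReal ((1 / L) ^ d) := by
  rw [cell'_eq_preimage]
  rw [(EuclideanSpace.volume_preserving_symm_measurableEquiv_toLp (Fin d)).measure_preimage
    (MeasurableSet.univ_pi fun i => measurableSet_Ico).nullMeasurableSet]
  rw [volume_pi_pi]
  have : ∀ i : Fin d, volume (Set.Ico (x i - 1 / (2 * L)) (x i + 1 / (2 * L)))
      = ENNReal.ofReal (1 / L) := by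
    intro i
    rw [Real.volume_Ico]
    congr 1
    have h2L : (1:ℝ) / (2 * L) = 1 / 2 * (1 / L) := by
      rw [one_div, mul_inv]; ring
    rw [h2L]; ring
  simp only [this, Finset.prod_const, Finset.card_univ, Fintype.card_fin]
  rw [ENNReal.ofReal_pow (by positivity)]

lemma volume_cell'_toReal (hL : 0 < L) (x : EuclideanSpace ℝ (Fin d)) :
    (volume (cell' L x)).toReal = (1 / L) ^ d := by
  rw [volume_cell' hL, ENNReal.toReal_ofReal (by positivity)]

lemma volume_cell'_lt_top (hL : 0 < L) (x : EuclideanSpace ℝ (Fin d)) :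
    volume (cell' L x) < ⊤ := by
  rw [volume_cell' hL]; exact ENNReal.ofReal_lt_top

lemma cell'_disjoint (hL : 0 < L) {x y : EuclideanSpace ℝ (Fin d)}
    (hx : inLattice L x) (hy : inLattice L y) (hxy : x ≠ y) :
    Disjoint (cell' L x) (cell' L y) := by
  rw [Set.disjoint_left]
  intro a ha hb
  apply hxy
  apply PiLp.ext
  intro i
  rcases hx i with ⟨z, hz⟩
  rcases hy i with ⟨w, hw⟩
  rcases ha i with ⟨ha1, ha2⟩
  rcases hb i with ⟨hb1, hb2⟩
  have h2L : (1:ℝ) / (2 * L) = 1 / 2 * (1 / L) := by rw [one_div, mul_inv]; ring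
  have hzw1 : ((z : ℝ) - w) / L < 1 / L := by
    rw [sub_div]; rw [hz] at ha1 ha2; rw [hw] at hb1 hb2; linarith
  have hzw2 : ((w : ℝ) - z) / L < 1 / L := by
    rw [sub_div]; rw [hz] at ha1 ha2; rw [hw] at hb1 hb2; linarith
  have h1 : (z : ℝ) - w < 1 := by have := (div_lt_div_iff_of_pos_right hL).mp hzw1; linarith
  have h2 : (w : ℝ) - z < 1 := by have := (div_lt_div_iff_of_pos_right hL).mp hzw2; linarith
  have hz1 : (z : ℤ) - w < 1 := by exact_mod_cast h1
  have hz2 : (w : ℤ) - z < 1 := by exact_mod_cast h2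
  have : z = w := by omega
  rw [hz, hw, this]

lemma cell'_cover (hL : 0 < L) (y : EuclideanSpace ℝ (Fin d)) :
    ∃ x : EuclideanSpace ℝ (Fin d), inLattice L x ∧ y ∈ cell' L x := by
  refine ⟨WithLp.toLp 2 (fun i => (⌊L * y i + 1 / 2⌋ : ℝ) / L : Fin d → ℝ), fun i => ⟨⌊L * y i + 1 / 2⌋, rfl⟩, ?_⟩
  intro i
  set z : ℤ := ⌊L * y i + 1 / 2⌋ with hz
  have h1 : (z : ℝ) ≤ L * y i + 1 / 2 := Int.floor_le _
  have h2 : L * y i + 1 / 2 < z + 1 := Int.lt_floor_add_one _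
  have hL' : L ≠ 0 := ne_of_gt hL
  have hhalf : (1 / (2 * L)) * L = 1 / 2 := by field_simp
  constructor
  · have : (z : ℝ) / L ≤ y i + 1 / (2 * L) := by
      rw [div_le_iff₀ hL]; nlinarith
    linarith
  · have : y i - 1 / (2 * L) < (z : ℝ) / L := by
      rw [lt_div_iff₀ hL]; nlinarith
    linarith

lemma countable_lattice (L : ℝ) (d : ℕ) :
    Countable {x : EuclideanSpace ℝ (Fin d) // inLattice L x} := by
  have : Function.Injective (fun x : {x : EuclideanSpace ℝ (Fin d) // inLattice L x} =>
      fun i => (x.2 i).choose) := by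
    intro x y h
    apply Subtype.ext
    apply PiLp.ext
    intro i
    have hx := (x.2 i).choose_spec
    have hy := (y.2 i).choose_spec
    have h' : ∀ j, (x.2 j).choose = (y.2 j).choose := fun j => congrFun h j
    rw [hx, hy, h' i]
  exact this.countable

lemma convex_cell (x : EuclideanSpace ℝ (Fin d)) : Convex ℝ (cell L x) := by
  intro y hy z hz a b ha hb hab
  intro i
  have hyz : (a • y + b • z) i = a * y i + b * z i := rfl
  rw [hyz]
  have key : a * y i + b * z i - x i = a * (y i - x i) + b * (z i - x i) := by
    linear_combination (x i) * hab
  rw [key]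
  calc |a * (y i - x i) + b * (z i - x i)| ≤ |a * (y i - x i)| + |b * (z i - x i)| := abs_add_le _ _
    _ = a * |y i - x i| + b * |z i - x i| := by
        rw [abs_mul, abs_mul, abs_of_nonneg ha, abs_of_nonneg hb]
    _ ≤ a * (1 / (2 * L)) + b * (1 / (2 * L)) := by
        gcongr
        exacts [hy i, hz i]
    _ = 1 / (2 * L) := by rw [← add_mul, hab, one_mul]

lemma norm_sub_le_of_mem_cell (hL : 0 < L) {x y : EuclideanSpace ℝ (Fin d)}
    (hy : y ∈ cell L x) : ‖y - x‖ ≤ Real.sqrt d * (1 / (2 * L)) := by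
  rw [EuclideanSpace.norm_eq]
  have h1 : ∑ i, ‖(y - x) i‖ ^ 2 ≤ (d : ℝ) * (1 / (2 * L)) ^ 2 := by
    calc ∑ i, ‖(y - x) i‖ ^ 2 ≤ ∑ _i : Fin d, (1 / (2 * L)) ^ 2 := by
          apply Finset.sum_le_sum
          intro i _
          have : ‖(y - x) i‖ = |y i - x i| := rfl
          rw [this]
          exact pow_le_pow_left₀ (abs_nonneg _) (hy i) 2
        _ = (d : ℝ) * (1 / (2 * L)) ^ 2 := by
          rw [Finset.sum_const, Finset.card_univ, Fintype.card_fin, nsmul_eq_mul]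
  calc Real.sqrt (∑ i, ‖(y - x) i‖ ^ 2) ≤ Real.sqrt ((d : ℝ) * (1 / (2 * L)) ^ 2) :=
        Real.sqrt_le_sqrt h1
    _ = Real.sqrt d * (1 / (2 * L)) := by
        rw [Real.sqrt_mul (Nat.cast_nonneg d), Real.sqrt_sq (by positivity)]


variable {m q : ℝ}

lemma jb_pos (hm : 0 < m) (x : EuclideanSpace ℝ (Fin d)) : 0 < jb m x :=
  Real.sqrt_pos.2 (by positivity)

lemma jb_rpow (hm : 0 < m) (x : EuclideanSpace ℝ (Fin d)) :
    jb m x ^ (-q) = (m + ‖x‖ ^ 2) ^ (-(q / 2)) := by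
  rw [jb, Real.sqrt_eq_rpow, ← Real.rpow_mul (by positivity : (0:ℝ) ≤ m + ‖x‖ ^ 2)]
  congr 1
  ring

lemma jb_rpow_pos (hm : 0 < m) (x : EuclideanSpace ℝ (Fin d)) : 0 < jb m x ^ (-q) :=
  Real.rpow_pos_of_pos (jb_pos hm x) _

lemma aux_rpow {A B K s : ℝ} (hA : 0 < A) (hB : 0 < B) (hK : 0 < K) (hs : 0 ≤ s)
    (h : B ≤ K * A) : A ^ (-s) ≤ K ^ s * B ^ (-s) := by
  have h1 : B / K ≤ A := (div_le_iff₀ hK).2 (by linarith [mul_comm K A])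
  have h2 : A ^ (-s) ≤ (B / K) ^ (-s) :=
    Real.rpow_le_rpow_of_nonpos (by positivity) h1 (by linarith)
  calc A ^ (-s) ≤ (B / K) ^ (-s) := h2
    _ = B ^ (-s) / K ^ (-s) := Real.div_rpow hB.le hK.le _
    _ = B ^ (-s) * (K ^ (-s))⁻¹ := div_eq_mul_inv _ _
    _ = K ^ s * B ^ (-s) := by rw [Real.rpow_neg hK.le, inv_inv]; ring

lemma jb_neg_q_le (hm : 0 < m) (hq0 : 0 ≤ q) {a b : EuclideanSpace ℝ (Fin d)}
    (h : ‖a - b‖ ^ 2 ≤ (d : ℝ)) :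
    jb m a ^ (-q) ≤ (2 + 2 * (d : ℝ) / m) ^ (q / 2) * jb m b ^ (-q) := by
  rw [jb_rpow hm, jb_rpow hm]
  have hq2 : 0 ≤ q / 2 := by linarith
  have hneg : -q = -(2 * (q/2)) := by ring
  have hKpos : 0 < 2 + 2 * (d : ℝ) / m := by positivity
  apply aux_rpow (by positivity) (by positivity) hKpos hq2
  -- m + ‖b‖² ≤ (2 + 2d/m)(m + ‖a‖²)
  have h1 : ‖b‖ ≤ ‖a‖ + ‖a - b‖ := by
    calc ‖b‖ = ‖a + (b - a)‖ := by rw [show a + (b - a) = b from by abel]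
      _ ≤ ‖a‖ + ‖b - a‖ := norm_add_le _ _
      _ = ‖a‖ + ‖a - b‖ := by rw [norm_sub_rev]
  have h2 : ‖b‖ ^ 2 ≤ 2 * ‖a‖ ^ 2 + 2 * (d : ℝ) := by
    nlinarith [sq_nonneg (‖a‖ - ‖a - b‖), norm_nonneg (a - b), norm_nonneg a, norm_nonneg b]
  have hK : 2 * (d : ℝ) / m * m = 2 * d := by field_simp
  have hdm : 0 ≤ 2 * (d : ℝ) / m * ‖a‖ ^ 2 := by positivity
  nlinarith [h2, hK, hdm, hm, sq_nonneg ‖a‖]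

lemma jb_neg_q_le_const (hm : 0 < m) (hq0 : 0 ≤ q) (x : EuclideanSpace ℝ (Fin d)) :
    jb m x ^ (-q) ≤ m ^ (-(q / 2)) := by
  rw [jb_rpow hm]
  exact Real.rpow_le_rpow_of_nonpos hm (by nlinarith [sq_nonneg ‖x‖]) (by linarith)

lemma continuous_jb_rpow (hm : 0 < m) :
    Continuous (fun x : EuclideanSpace ℝ (Fin d) => jb m x ^ (-q)) := by
  apply Continuous.rpow_const
  · exact Real.continuous_sqrt.comp (continuous_const.add (continuous_norm.pow 2))
  · exact fun x => Or.inl (jb_pos hm x).ne'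

lemma integrable_jb (hm : 0 < m) (hq : (d : ℝ) < q) :
    Integrable (fun x : EuclideanSpace ℝ (Fin d) => jb m x ^ (-q)) := by
  have hq0 : 0 ≤ q := le_trans (Nat.cast_nonneg d) hq.le
  have hμ : Integrable (fun x : EuclideanSpace ℝ (Fin d) => ((1:ℝ) + ‖x‖ ^ 2) ^ (-q / 2)) :=
    integrable_rpow_neg_one_add_norm_sq (by rw [finrank_euclideanSpace_fin]; exact hq)
  have hminpos : 0 < min m 1 := lt_min hm one_pos
  refine (hμ.const_mul ((min m 1) ^ (-(q/2)))).mono'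
    ((continuous_jb_rpow hm).aestronglyMeasurable) (Filter.Eventually.of_forall fun x => ?_)
  rw [Real.norm_eq_abs, abs_of_nonneg (jb_rpow_pos hm x).le]
  rw [jb_rpow hm]
  have key : min m 1 * (1 + ‖x‖ ^ 2) ≤ m + ‖x‖ ^ 2 := by
    have h1 : min m 1 ≤ m := min_le_left _ _
    have h2 : min m 1 ≤ 1 := min_le_right _ _
    nlinarith [sq_nonneg ‖x‖]
  calc (m + ‖x‖ ^ 2) ^ (-(q/2)) ≤ (min m 1 * (1 + ‖x‖ ^ 2)) ^ (-(q/2)) :=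
        Real.rpow_le_rpow_of_nonpos (by positivity) key (by linarith)
    _ = (min m 1) ^ (-(q/2)) * (1 + ‖x‖ ^ 2) ^ (-(q/2)) :=
        Real.mul_rpow hminpos.le (by positivity)
    _ = (min m 1) ^ (-(q/2)) * (1 + ‖x‖ ^ 2) ^ (-q/2) := by rw [neg_div]

end Stmt8Aux

/-- Quantitative comparison between lattice sums and integrals: for `q > d`, `m > 0` there is
`C > 0` (depending only on `d, q, m`) such that for all `L ≥ 1` and every nonnegative,
integrable `C¹` function `f` with `|∇f(x)| ≤ ⟨x⟩^{−q}`, the lattice sums of `f` and of the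
cellwise suprema of `|∇f|` converge, and
`|L^{−d} ∑_{x ∈ ℤ_L^d} f(x) − ∫ f| ≤ C L^{−d−1} ∑_{x ∈ ℤ_L^d} sup_{C_{x,L}} |∇f|` as well as
`∑_{x ∈ ℤ_L^d} f(x) ≤ C (L^{d−1} + L^d ∫ f)`. -/
theorem stmt8 (d : ℕ) (hd : 1 ≤ d) (q m : ℝ) (hq : (d : ℝ) < q) (hm : 0 < m) :
    ∃ C : ℝ, 0 < C ∧ ∀ L : ℝ, 1 ≤ L → ∀ f : EuclideanSpace ℝ (Fin d) → ℝ,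
      ContDiff ℝ 1 f → (∀ x, 0 ≤ f x) → Integrable f →
      (∀ x, ‖fderiv ℝ f x‖ ≤ jb m x ^ (-q)) →
      (Summable fun x : {x : EuclideanSpace ℝ (Fin d) // inLattice L x} => f x) ∧
      (Summable fun x : {x : EuclideanSpace ℝ (Fin d) // inLattice L x} =>
        ⨆ y : cell L (x : EuclideanSpace ℝ (Fin d)), ‖fderiv ℝ f y‖) ∧
      (|L ^ (-(d : ℝ)) * (∑' x : {x : EuclideanSpace ℝ (Fin d) // inLattice L x}, f x)
          - ∫ x, f x|
        ≤ C * L ^ (-(d : ℝ) - 1) *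
            ∑' x : {x : EuclideanSpace ℝ (Fin d) // inLattice L x},
              ⨆ y : cell L (x : EuclideanSpace ℝ (Fin d)), ‖fderiv ℝ f y‖) ∧
      (∑' x : {x : EuclideanSpace ℝ (Fin d) // inLattice L x}, f x)
        ≤ C * (L ^ ((d : ℝ) - 1) + L ^ (d : ℝ) * ∫ x, f x) := by
  have hq0 : 0 ≤ q := le_trans (Nat.cast_nonneg d) hq.le
  set K : ℝ := (2 + 2 * (d : ℝ) / m) ^ (q / 2) with hK_def
  have hKpos : 0 < K := Real.rpow_pos_of_pos (by positivity) _
  set I0 : ℝ := ∫ x : EuclideanSpace ℝ (Fin d), jb m x ^ (-q) with hI0_def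
  have hI0_nonneg : 0 ≤ I0 := integral_nonneg fun x => (Stmt8Aux.jb_rpow_pos hm x).le
  set C : ℝ := 1 + Real.sqrt d / 2 + Real.sqrt d * K ^ 2 * I0 / 2 with hC_def
  have hCpos : 0 < C := by positivity
  have hC1 : (1 : ℝ) ≤ C := by
    have h1 : 0 ≤ Real.sqrt d / 2 := by positivity
    have h2 : 0 ≤ Real.sqrt d * K ^ 2 * I0 / 2 := by positivity
    rw [hC_def]; linarith
  have hCs : Real.sqrt d / 2 ≤ C := by
    have h2 : 0 ≤ Real.sqrt d * K ^ 2 * I0 / 2 := by positivity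
    rw [hC_def]; linarith
  have hCI : Real.sqrt d * K ^ 2 * I0 / 2 ≤ C := by
    have h1 : 0 ≤ Real.sqrt d / 2 := by positivity
    rw [hC_def]; linarith
  refine ⟨C, hCpos, ?_⟩
  intro L hL f hf hfpos hfint hfd
  have hL0 : 0 < L := lt_of_lt_of_le one_pos hL
  haveI : Countable {x : EuclideanSpace ℝ (Fin d) // inLattice L x} :=
    Stmt8Aux.countable_lattice L d
  set Λ := {x : EuclideanSpace ℝ (Fin d) // inLattice L x} with hΛ
  set s : Λ → Set (EuclideanSpace ℝ (Fin d)) := fun x => Stmt8Aux.cell' L x.1 with hs_def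
  have hmeas : ∀ x : Λ, MeasurableSet (s x) := fun x => Stmt8Aux.measurableSet_cell' _
  have hdisj : Pairwise (Function.onFun Disjoint s) := fun x y hxy =>
    Stmt8Aux.cell'_disjoint hL0 x.2 y.2 (fun h => hxy (Subtype.ext h))
  have hcover : (⋃ x : Λ, s x) = Set.univ := by
    rw [Set.eq_univ_iff_forall]
    intro y
    obtain ⟨x, hx1, hx2⟩ := Stmt8Aux.cell'_cover hL0 y
    exact Set.mem_iUnion.2 ⟨⟨x, hx1⟩, hx2⟩
  have hvol : ∀ x : Λ, (volume (s x)).toReal = (1 / L) ^ d :=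
    fun x => Stmt8Aux.volume_cell'_toReal hL0 x.1
  have hvol_lt : ∀ x : Λ, volume (s x) < ⊤ := fun x => Stmt8Aux.volume_cell'_lt_top hL0 x.1
  have hLd : (1 / L) ^ d * L ^ d = 1 := by
    rw [one_div, inv_pow, inv_mul_cancel₀ (pow_ne_zero d hL0.ne')]
  set g : EuclideanSpace ℝ (Fin d) → ℝ := fun x => jb m x ^ (-q) with hg_def
  have hgint : Integrable g := Stmt8Aux.integrable_jb hm hq
  have hg_pos : ∀ x, 0 ≤ g x := fun x => (Stmt8Aux.jb_rpow_pos hm x).le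
  set S : Λ → ℝ := fun x =>
    ⨆ y : cell L (x : EuclideanSpace ℝ (Fin d)), ‖fderiv ℝ f y‖ with hS_def
  have hcellne : ∀ x : Λ, (cell L (x : EuclideanSpace ℝ (Fin d))).Nonempty :=
    fun x => ⟨x.1, Stmt8Aux.mem_cell_self hL0 _⟩
  haveI hne : ∀ x : Λ, Nonempty (cell L (x : EuclideanSpace ℝ (Fin d))) :=
    fun x => (hcellne x).to_subtype
  have hbdd : ∀ x : Λ,
      BddAbove (Set.range fun y : cell L (x : EuclideanSpace ℝ (Fin d)) => ‖fderiv ℝ f y‖) := by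
    intro x
    refine ⟨m ^ (-(q / 2)), ?_⟩
    rintro _ ⟨y, rfl⟩
    exact (hfd y).trans (Stmt8Aux.jb_neg_q_le_const hm hq0 _)
  have hS_le : ∀ (x : Λ) (y : EuclideanSpace ℝ (Fin d)),
      y ∈ cell L (x : EuclideanSpace ℝ (Fin d)) → ‖fderiv ℝ f y‖ ≤ S x := by
    intro x y hy
    exact le_ciSup (hbdd x) (⟨y, hy⟩ : cell L (x : EuclideanSpace ℝ (Fin d)))
  have hS_nonneg : ∀ x : Λ, 0 ≤ S x := fun x =>
    le_trans (norm_nonneg _) (hS_le x x.1 (Stmt8Aux.mem_cell_self hL0 _))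
  have hcell_dist : ∀ (x y : EuclideanSpace ℝ (Fin d)), y ∈ cell L x →
      ‖y - x‖ ^ 2 ≤ (d : ℝ) := by
    intro x y hy
    have h := Stmt8Aux.norm_sub_le_of_mem_cell hL0 hy
    have h2 : (1 : ℝ) / (2 * L) ≤ 1 := by
      rw [div_le_one (by linarith)]; linarith
    have h3 : ‖y - x‖ ≤ Real.sqrt d := by
      calc ‖y - x‖ ≤ Real.sqrt d * (1 / (2 * L)) := h
        _ ≤ Real.sqrt d * 1 := by gcongr
        _ = Real.sqrt d := mul_one _
    calc ‖y - x‖ ^ 2 ≤ Real.sqrt d ^ 2 := pow_le_pow_left₀ (norm_nonneg _) h3 2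
      _ = (d : ℝ) := Real.sq_sqrt (Nat.cast_nonneg d)
  have hS_bound : ∀ x : Λ, S x ≤ K * g x.1 := by
    intro x
    apply ciSup_le
    intro y
    exact (hfd y).trans (Stmt8Aux.jb_neg_q_le hm hq0 (hcell_dist x.1 y y.2))
  have hg_rev : ∀ (x : Λ) (y : EuclideanSpace ℝ (Fin d)), y ∈ s x → g x.1 ≤ K * g y := by
    intro x y hy
    apply Stmt8Aux.jb_neg_q_le hm hq0
    rw [← norm_neg, neg_sub]
    exact hcell_dist x.1 y (Stmt8Aux.cell'_subset_cell _ hy)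
  have hg_cell' : ∀ x : Λ, g x.1 ≤ K * L ^ d * ∫ y in s x, g y := by
    intro x
    have h1 : ∫ y in s x, (K⁻¹ * g x.1) ≤ ∫ y in s x, g y := by
      apply setIntegral_mono_on (integrableOn_const (hvol_lt x).ne)
        hgint.integrableOn (hmeas x)
      intro y hy
      rw [inv_mul_le_iff₀ hKpos]
      exact hg_rev x y hy
    rw [setIntegral_const, smul_eq_mul, measureReal_def, hvol x] at h1
    have h2 := mul_le_mul_of_nonneg_right h1 (pow_nonneg hL0.le d : (0:ℝ) ≤ L ^ d)
    calc g x.1 = K * K⁻¹ * g x.1 * ((1 / L) ^ d * L ^ d) := by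
          rw [mul_inv_cancel₀ hKpos.ne', hLd]; ring
      _ = K * ((1 / L) ^ d * (K⁻¹ * g x.1) * L ^ d) := by ring
      _ ≤ K * ((∫ y in s x, g y) * L ^ d) := by
          apply mul_le_mul_of_nonneg_left h2 hKpos.le
      _ = K * L ^ d * ∫ y in s x, g y := by ring
  have hint_g_nonneg : ∀ x : Λ, 0 ≤ ∫ y in s x, g y :=
    fun x => setIntegral_nonneg (hmeas x) (fun y _ => hg_pos y)
  have hsum_int_g : ∀ u : Finset Λ, ∑ x ∈ u, ∫ y in s x, g y ≤ I0 := by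
    intro u
    rw [← integral_biUnion_finset u (fun x _ => hmeas x)
      (fun a _ b _ hab => hdisj hab) (fun x _ => hgint.integrableOn)]
    exact setIntegral_le_integral hgint (Filter.Eventually.of_forall fun y => hg_pos y)
  have hg_sum_le : ∀ u : Finset Λ, ∑ x ∈ u, g x.1 ≤ K * L ^ d * I0 := by
    intro u
    calc ∑ x ∈ u, g x.1 ≤ ∑ x ∈ u, K * L ^ d * ∫ y in s x, g y :=
          Finset.sum_le_sum (fun x _ => hg_cell' x)
      _ = K * L ^ d * ∑ x ∈ u, ∫ y in s x, g y := (Finset.mul_sum _ _ _).symm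
      _ ≤ K * L ^ d * I0 :=
          mul_le_mul_of_nonneg_left (hsum_int_g u) (by positivity)
  have hg_summable : Summable (fun x : Λ => g x.1) :=
    summable_of_sum_le (fun x => hg_pos x.1) hg_sum_le
  have hg_tsum_le : ∑' x : Λ, g x.1 ≤ K * L ^ d * I0 :=
    hg_summable.tsum_le_of_sum_le hg_sum_le
  have hKg_summable : Summable (fun x : Λ => K * g x.1) := hg_summable.mul_left K
  have hS_summable : Summable S :=
    Summable.of_nonneg_of_le hS_nonneg hS_bound hKg_summable
  have hS_tsum_le : ∑' x, S x ≤ K ^ 2 * L ^ d * I0 := by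
    calc ∑' x, S x ≤ ∑' x : Λ, K * g x.1 := hS_summable.tsum_le_tsum hS_bound hKg_summable
      _ = K * ∑' x : Λ, g x.1 := tsum_mul_left
      _ ≤ K * (K * L ^ d * I0) := mul_le_mul_of_nonneg_left hg_tsum_le hKpos.le
      _ = K ^ 2 * L ^ d * I0 := by ring
  have hS_tsum_nonneg : 0 ≤ ∑' x, S x := tsum_nonneg hS_nonneg
  have hf_cont : Continuous f := hf.continuous
  have hf_diff : ∀ y : EuclideanSpace ℝ (Fin d), DifferentiableAt ℝ f y :=
    fun y => (hf.differentiable one_ne_zero).differentiableAt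
  set r : ℝ := Real.sqrt d * (1 / (2 * L)) with hr_def
  have hr_nonneg : 0 ≤ r := by positivity
  have hMVT : ∀ (x : Λ) (y : EuclideanSpace ℝ (Fin d)),
      y ∈ cell L (x : EuclideanSpace ℝ (Fin d)) → ‖f y - f x.1‖ ≤ S x * r := by
    intro x y hy
    have h0 := (Stmt8Aux.convex_cell (L := L) (x.1)).norm_image_sub_le_of_norm_fderiv_le
      (fun z _ => hf_diff z) (fun z hz => hS_le x z hz)
      (Stmt8Aux.mem_cell_self hL0 _) hy
    calc ‖f y - f x.1‖ ≤ S x * ‖y - x.1‖ := h0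
      _ ≤ S x * r := by
          apply mul_le_mul_of_nonneg_left (Stmt8Aux.norm_sub_le_of_mem_cell hL0 hy) (hS_nonneg x)
  have hf_cell : ∀ x : Λ, (1 / L) ^ d * (f x.1 - S x * r) ≤ ∫ y in s x, f y := by
    intro x
    have h1 : ∫ y in s x, (f x.1 - S x * r) ≤ ∫ y in s x, f y := by
      apply setIntegral_mono_on (integrableOn_const (hvol_lt x).ne)
        hfint.integrableOn (hmeas x)
      intro y hy
      have h2 := hMVT x y (Stmt8Aux.cell'_subset_cell _ hy)
      rw [Real.norm_eq_abs, abs_sub_comm] at h2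
      have h3 := le_abs_self (f x.1 - f y)
      linarith
    rwa [setIntegral_const, smul_eq_mul, measureReal_def, hvol x] at h1
  have hf_cell' : ∀ x : Λ, f x.1 ≤ L ^ d * (∫ y in s x, f y) + r * S x := by
    intro x
    have h2 := mul_le_mul_of_nonneg_right (hf_cell x) (pow_nonneg hL0.le d : (0:ℝ) ≤ L ^ d)
    have h3 : f x.1 - S x * r ≤ (∫ y in s x, f y) * L ^ d := by
      calc f x.1 - S x * r = (1 / L) ^ d * (f x.1 - S x * r) * L ^ d := by
            rw [show (1 / L) ^ d * (f x.1 - S x * r) * L ^ d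
                = (f x.1 - S x * r) * ((1 / L) ^ d * L ^ d) from by ring, hLd, mul_one]
        _ ≤ (∫ y in s x, f y) * L ^ d := h2
    linarith
  have hHasSum : HasSum (fun x : Λ => ∫ y in s x, f y) (∫ y, f y) := by
    have h0 := MeasureTheory.hasSum_integral_iUnion hmeas hdisj
      (by rw [hcover]; exact hfint.integrableOn)
    rwa [hcover, MeasureTheory.setIntegral_univ] at h0
  have hfint_summable : Summable (fun x : Λ => ∫ y in s x, f y) := hHasSum.summable
  have hfint_tsum : ∑' x : Λ, ∫ y in s x, f y = ∫ y, f y := hHasSum.tsum_eq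
  have hbound_summable : Summable (fun x : Λ => L ^ d * (∫ y in s x, f y) + r * S x) :=
    (hfint_summable.mul_left (L ^ d)).add (hS_summable.mul_left r)
  have hf_summable : Summable (fun x : Λ => f x.1) :=
    Summable.of_nonneg_of_le (fun x => hfpos x.1) hf_cell' hbound_summable
  have hint_f_nonneg : 0 ≤ ∫ y, f y := integral_nonneg hfpos
  -- rpow conversions
  have hrpow_d : L ^ ((d : ℝ)) = L ^ d := Real.rpow_natCast L d
  have hrpow_neg_d : L ^ (-(d : ℝ)) = (1 / L) ^ d := by
    rw [Real.rpow_neg hL0.le, Real.rpow_natCast, one_div, inv_pow]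
  have hrpow_dm1 : L ^ ((d : ℝ) - 1) = L ^ d / L := by
    rw [Real.rpow_sub hL0, Real.rpow_natCast, Real.rpow_one]
  have hrpow_ndm1 : L ^ (-(d : ℝ) - 1) = (1 / L) ^ d * (1 / L) := by
    rw [show -(d : ℝ) - 1 = (-(d : ℝ)) + (-1) from by ring, Real.rpow_add hL0,
      hrpow_neg_d, Real.rpow_neg_one, one_div]
  refine ⟨hf_summable, hS_summable, ?_, ?_⟩
  · -- (a)
    set T : Λ → ℝ := fun x => (1 / L) ^ d * f x.1 - ∫ y in s x, f y with hT_def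
    have hT_bound : ∀ x : Λ, |T x| ≤ ((1 / L) ^ d * r) * S x := by
      intro x
      have hconst : ∫ _y in s x, f x.1 = (1 / L) ^ d * f x.1 := by
        rw [setIntegral_const, smul_eq_mul, measureReal_def, hvol x]
      have heq : (∫ y in s x, (f x.1 - f y)) = (1 / L) ^ d * f x.1 - ∫ y in s x, f y := by
        rw [integral_sub (integrableOn_const (C := f x.1) (hvol_lt x).ne) hfint.integrableOn, hconst]
      have hmeasf : AEStronglyMeasurable (fun y => f x.1 - f y) (volume.restrict (s x)) :=
        ((continuous_const.sub hf_cont).aestronglyMeasurable).restrict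
      have hptwise : ∀ y ∈ s x, ‖f x.1 - f y‖ ≤ S x * r := by
        intro y hy
        rw [norm_sub_rev]
        exact hMVT x y (Stmt8Aux.cell'_subset_cell _ hy)
      have h4 := norm_setIntegral_le_of_norm_le_const (hvol_lt x) hptwise
      rw [measureReal_def, hvol x] at h4
      calc |T x| = ‖∫ y in s x, (f x.1 - f y)‖ := by
            rw [heq]; exact (Real.norm_eq_abs _).symm
        _ ≤ S x * r * (1 / L) ^ d := h4
        _ = ((1 / L) ^ d * r) * S x := by ring
    have hT_abs_summable : Summable (fun x : Λ => |T x|) :=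
      Summable.of_nonneg_of_le (fun x => abs_nonneg _) hT_bound
        (hS_summable.mul_left ((1 / L) ^ d * r))
    have hT_norm_summable : Summable (fun x : Λ => ‖T x‖) := by
      simpa [Real.norm_eq_abs] using hT_abs_summable
    have hT_summable : Summable T := hT_norm_summable.of_norm
    have htsum_T : ∑' x : Λ, T x = L ^ (-(d : ℝ)) * (∑' x : Λ, f x.1) - ∫ y, f y := by
      rw [hT_def]
      rw [Summable.tsum_sub (hf_summable.mul_left ((1 / L) ^ d)) hfint_summable,
        tsum_mul_left, hfint_tsum, hrpow_neg_d]
    rw [← htsum_T]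
    calc |∑' x : Λ, T x| = ‖∑' x : Λ, T x‖ := (Real.norm_eq_abs _).symm
      _ ≤ ∑' x : Λ, ‖T x‖ := norm_tsum_le_tsum_norm hT_norm_summable
      _ = ∑' x : Λ, |T x| := by simp [Real.norm_eq_abs]
      _ ≤ ∑' x : Λ, ((1 / L) ^ d * r) * S x :=
          hT_abs_summable.tsum_le_tsum hT_bound (hS_summable.mul_left _)
      _ = ((1 / L) ^ d * r) * ∑' x : Λ, S x := tsum_mul_left
      _ ≤ C * L ^ (-(d : ℝ) - 1) * ∑' x : Λ, S x := by
          apply mul_le_mul_of_nonneg_right _ hS_tsum_nonneg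
          rw [hrpow_ndm1, hr_def]
          calc (1 / L) ^ d * (Real.sqrt d * (1 / (2 * L)))
              = (Real.sqrt d / 2) * ((1 / L) ^ d * (1 / L)) := by ring
            _ ≤ C * ((1 / L) ^ d * (1 / L)) := by
                apply mul_le_mul_of_nonneg_right hCs (by positivity)
  · -- (b)
    rw [hrpow_dm1, hrpow_d]
    have hb : ∑' x : Λ, f x.1 ≤ L ^ d * (∫ y, f y) + r * (K ^ 2 * L ^ d * I0) := by
      calc ∑' x : Λ, f x.1 ≤ ∑' x : Λ, (L ^ d * (∫ y in s x, f y) + r * S x) :=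
            hf_summable.tsum_le_tsum hf_cell' hbound_summable
        _ = L ^ d * (∑' x : Λ, ∫ y in s x, f y) + r * ∑' x : Λ, S x := by
            rw [Summable.tsum_add (hfint_summable.mul_left _) (hS_summable.mul_left r),
              tsum_mul_left, tsum_mul_left]
        _ = L ^ d * (∫ y, f y) + r * ∑' x : Λ, S x := by rw [hfint_tsum]
        _ ≤ L ^ d * (∫ y, f y) + r * (K ^ 2 * L ^ d * I0) := by
            have := mul_le_mul_of_nonneg_left hS_tsum_le hr_nonneg
            linarith
    have hLne : L ≠ 0 := hL0.ne'
    have h1 : r * (K ^ 2 * L ^ d * I0) = (Real.sqrt d * K ^ 2 * I0 / 2) * (L ^ d / L) := by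
      rw [hr_def]; field_simp
    calc ∑' x : Λ, f x.1 ≤ L ^ d * (∫ y, f y) + r * (K ^ 2 * L ^ d * I0) := hb
      _ = (Real.sqrt d * K ^ 2 * I0 / 2) * (L ^ d / L) + L ^ d * (∫ y, f y) := by
          rw [h1]; ring
      _ ≤ C * (L ^ d / L) + C * (L ^ d * (∫ y, f y)) := by
          have hLdL : (0:ℝ) ≤ L ^ d / L := by positivity
          have hLdf : (0:ℝ) ≤ L ^ d * (∫ y, f y) :=
            mul_nonneg (pow_nonneg hL0.le d) hint_f_nonneg
          have c1 := mul_le_mul_of_nonneg_right hCI hLdL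
          have c2 : L ^ d * (∫ y, f y) ≤ C * (L ^ d * (∫ y, f y)) :=
            le_mul_of_one_le_left hLdf hC1
          exact add_le_add c1 c2
      _ = C * (L ^ d / L + L ^ d * ∫ y, f y) := by ring
end
end

section
/- For every integer n ≥ 1, every real λ ≠ 0 and every t ≥ 0, one has |∫₀ᵗ e^{iλτ} τ^{n−1} dτ| ≤ min(tⁿ, 3 t^{n−1}/|λ|). -/
noncomputable section

open Complex intervalIntegral

/-- For every `n ≥ 1`, `λ ≠ 0` and `t ≥ 0`:
`|∫₀ᵗ e^{iλτ} τ^{n−1} dτ| ≤ min(tⁿ, 3 t^{n−1}/|λ|)`. -/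
theorem stmt11 (n : ℕ) (hn : 1 ≤ n) (lam : ℝ) (hlam : lam ≠ 0) (t : ℝ) (ht : 0 ≤ t) :
    ‖∫ τ in (0:ℝ)..t, Complex.exp (Complex.I * (lam : ℂ) * (τ : ℂ)) * (τ : ℂ) ^ (n - 1)‖
      ≤ min (t ^ n) (3 * t ^ (n - 1) / |lam|) := by
  obtain ⟨m, rfl⟩ : ∃ m, n = m + 1 := ⟨n - 1, (Nat.succ_pred_eq_of_pos hn).symm⟩
  simp only [Nat.add_sub_cancel]
  have hlamC : (Complex.I * (lam : ℂ)) ≠ 0 :=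
    mul_ne_zero Complex.I_ne_zero (by exact_mod_cast hlam)
  have hlampos : 0 < |lam| := abs_pos.mpr hlam
  have hexp_norm : ∀ τ : ℝ, ‖Complex.exp (Complex.I * (lam : ℂ) * (τ : ℂ))‖ = 1 := by
    intro τ
    rw [Complex.norm_exp]
    simp [mul_comm, mul_assoc]
  have hnormIlam : ‖Complex.I * (lam : ℂ)‖ = |lam| := by
    simp [map_mul, Complex.norm_real]
  refine le_min ?_ ?_
  · -- trivial bound
    calc ‖∫ τ in (0:ℝ)..t, Complex.exp (Complex.I * (lam : ℂ) * (τ : ℂ)) * (τ : ℂ) ^ m‖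
        ≤ ∫ τ in (0:ℝ)..t, ‖Complex.exp (Complex.I * (lam : ℂ) * (τ : ℂ)) * (τ : ℂ) ^ m‖ :=
          intervalIntegral.norm_integral_le_integral_norm ht
      _ = ∫ τ in (0:ℝ)..t, τ ^ m := by
          apply intervalIntegral.integral_congr
          intro τ hτ
          rw [Set.uIcc_of_le ht] at hτ
          simp [norm_mul, hexp_norm, norm_pow, Complex.norm_real,
            _root_.abs_of_nonneg hτ.1]
      _ = t ^ (m + 1) / (m + 1) := by rw [integral_pow]; simp
      _ ≤ t ^ (m + 1) := div_le_self (pow_nonneg ht _) (by exact_mod_cast Nat.succ_le_succ (Nat.zero_le m))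
  · -- integration by parts bound
    set v : ℝ → ℂ := fun τ => Complex.exp (Complex.I * (lam : ℂ) * (τ : ℂ)) / (Complex.I * lam) with hv
    have hdv : ∀ τ : ℝ, HasDerivAt v (Complex.exp (Complex.I * (lam : ℂ) * (τ : ℂ))) τ := by
      intro τ
      have h1 : HasDerivAt (fun z : ℂ => Complex.exp (Complex.I * (lam : ℂ) * z))
          (Complex.exp (Complex.I * (lam : ℂ) * (τ : ℂ)) * (Complex.I * lam)) (τ : ℂ) := by
        simpa using ((hasDerivAt_id ((τ : ℝ) : ℂ)).const_mul (Complex.I * (lam : ℂ))).cexp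
      have h2 := (h1.comp_ofReal).div_const (Complex.I * lam)
      simpa [mul_div_assoc, mul_div_cancel_right₀ _ hlamC] using h2
    have hdu : ∀ τ : ℝ, HasDerivAt (fun τ : ℝ => ((τ : ℂ)) ^ (m + 1 - 1))
        ((m : ℂ) * (τ : ℂ) ^ (m - 1)) τ := by
      intro τ
      have := (hasDerivAt_pow m ((τ : ℝ) : ℂ)).comp_ofReal
      simpa using this
    have hibp :
        (∫ τ in (0:ℝ)..t, ((τ : ℂ)) ^ m * Complex.exp (Complex.I * (lam : ℂ) * (τ : ℂ)))
          = ((t : ℂ)) ^ m * v t - ((0 : ℝ) : ℂ) ^ m * v 0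
            - ∫ τ in (0:ℝ)..t, ((m : ℂ) * (τ : ℂ) ^ (m - 1)) * v τ := by
      apply intervalIntegral.integral_mul_deriv_eq_deriv_mul
        (fun τ _ => by simpa using hdu τ) (fun τ _ => hdv τ)
      · apply Continuous.intervalIntegrable
        continuity
      · apply Continuous.intervalIntegrable
        continuity
    have hveq : (∫ τ in (0:ℝ)..t, Complex.exp (Complex.I * (lam : ℂ) * (τ : ℂ)) * (τ : ℂ) ^ m)
        = ∫ τ in (0:ℝ)..t, ((τ : ℂ)) ^ m * Complex.exp (Complex.I * (lam : ℂ) * (τ : ℂ)) := by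
      simp [mul_comm]
    have hvnorm : ∀ τ : ℝ, ‖v τ‖ = 1 / |lam| := by
      intro τ
      rw [hv]
      simp only [norm_div, hexp_norm, hnormIlam]
    have hterm1 : ‖((t : ℂ)) ^ m * v t‖ = t ^ m / |lam| := by
      rw [norm_mul, hvnorm, norm_pow, Complex.norm_real, Real.norm_eq_abs, _root_.abs_of_nonneg ht]
      ring
    have hterm2 : ‖((0 : ℝ) : ℂ) ^ m * v 0‖ ≤ t ^ m / |lam| := by
      rw [norm_mul, hvnorm, norm_pow]
      have : ‖((0:ℝ) : ℂ)‖ ^ m ≤ t ^ m := by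
        simp only [Complex.norm_real, Real.norm_eq_abs, abs_zero]
        exact pow_le_pow_left₀ le_rfl ht m
      calc ‖((0:ℝ):ℂ)‖ ^ m * (1 / |lam|) ≤ t ^ m * (1 / |lam|) := by
            apply mul_le_mul_of_nonneg_right this
            positivity
        _ = t ^ m / |lam| := by ring
    have hterm3 : ‖∫ τ in (0:ℝ)..t, ((m : ℂ) * (τ : ℂ) ^ (m - 1)) * v τ‖ ≤ t ^ m / |lam| := by
      calc ‖∫ τ in (0:ℝ)..t, ((m : ℂ) * (τ : ℂ) ^ (m - 1)) * v τ‖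
          ≤ ∫ τ in (0:ℝ)..t, ‖((m : ℂ) * (τ : ℂ) ^ (m - 1)) * v τ‖ :=
            intervalIntegral.norm_integral_le_integral_norm ht
        _ = ∫ τ in (0:ℝ)..t, (m : ℝ) * τ ^ (m - 1) * (1 / |lam|) := by
            apply intervalIntegral.integral_congr
            intro τ hτ
            rw [Set.uIcc_of_le ht] at hτ
            simp only [norm_mul, hvnorm, norm_pow, Complex.norm_real, Complex.norm_natCast,
              Real.norm_eq_abs, _root_.abs_of_nonneg hτ.1]
        _ ≤ t ^ m / |lam| := by
            rcases Nat.eq_zero_or_pos m with hm | hm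
            · subst hm
              simp only [Nat.cast_zero, zero_mul, intervalIntegral.integral_zero, pow_zero]
              positivity
            · have hm1 : m - 1 + 1 = m := Nat.succ_pred_eq_of_pos hm
              have hmne : ((m : ℝ)) ≠ 0 := Nat.cast_ne_zero.mpr hm.ne'
              have hmcast : ((m - 1 : ℕ) : ℝ) + 1 = (m : ℝ) := by
                exact_mod_cast congrArg (Nat.cast : ℕ → ℝ) hm1
              have hint : (∫ τ in (0:ℝ)..t, (m : ℝ) * τ ^ (m - 1) * (1 / |lam|))
                  = t ^ m / |lam| := by
                rw [intervalIntegral.integral_mul_const, intervalIntegral.integral_const_mul,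
                  integral_pow, hm1, hmcast, zero_pow hm.ne', sub_zero]
                field_simp
              exact hint.le
    calc ‖∫ τ in (0:ℝ)..t, Complex.exp (Complex.I * (lam : ℂ) * (τ : ℂ)) * (τ : ℂ) ^ m‖
        = ‖((t : ℂ)) ^ m * v t - ((0:ℝ) : ℂ) ^ m * v 0
            - ∫ τ in (0:ℝ)..t, ((m : ℂ) * (τ : ℂ) ^ (m - 1)) * v τ‖ := by rw [hveq, hibp]
      _ ≤ ‖((t : ℂ)) ^ m * v t - ((0:ℝ) : ℂ) ^ m * v 0‖
            + ‖∫ τ in (0:ℝ)..t, ((m : ℂ) * (τ : ℂ) ^ (m - 1)) * v τ‖ := norm_sub_le _ _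
      _ ≤ (‖((t : ℂ)) ^ m * v t‖ + ‖((0:ℝ) : ℂ) ^ m * v 0‖)
            + ‖∫ τ in (0:ℝ)..t, ((m : ℂ) * (τ : ℂ) ^ (m - 1)) * v τ‖ := by
            gcongr
            exact norm_sub_le _ _
      _ ≤ (t ^ m / |lam| + t ^ m / |lam|) + t ^ m / |lam| := by
            rw [hterm1]
            gcongr
      _ = 3 * t ^ m / |lam| := by ring
end
end

section
/- Let V be a real vector space, let L and J be finite sets, and let (e_ℓ)_{ℓ∈L} be a linearly independent family in V. For each j ∈ J let B_j ⊆ L be a nonempty subset and ι_j : B_j → {−1, +1} a sign assignment, and set v_j := ∑_{ℓ ∈ B_j} ι_j(ℓ) e_ℓ. Assume that every ℓ ∈ L belongs to at most two of the sets (B_j)_{j∈J}. Then the dimension of the linear span of {v_j : j ∈ J} is at least (#J)/2. -/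
open Finset Submodule Module

/-- Extend a linear dependence on a sub-family indexed by a finset to a
coefficient function on the whole index type. -/
lemma exists_relation_of_not_linearIndependent {V J : Type*} [AddCommGroup V] [Module ℝ V]
    [Fintype J] [DecidableEq J] (v : J → V) (S : Finset J)
    (hnot : ¬ LinearIndependent ℝ (fun j : S => v j)) :
    ∃ h : J → ℝ, (∑ j, h j • v j = 0) ∧ (∀ j, h j ≠ 0 → j ∈ S) ∧ ∃ j, h j ≠ 0 := by
  rw [Fintype.not_linearIndependent_iff] at hnot
  obtain ⟨g, hg0, i, hi⟩ := hnot
  refine ⟨fun j => if hj : j ∈ S then g ⟨j, hj⟩ else 0, ?_, ?_, ⟨i, by simp [i.2, hi]⟩⟩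
  · have key : ∑ j ∈ S, (if hj : j ∈ S then g ⟨j, hj⟩ else 0) • v j = 0 := by
      rw [← Finset.sum_attach S (fun j => (if hj : j ∈ S then g ⟨j, hj⟩ else 0) • v j)]
      simpa using hg0
    rw [← Finset.sum_subset (Finset.subset_univ S) (fun x _ hx => by simp [hx])]
    exact key
  · intro j hj
    by_contra hjS
    simp [hjS] at hj

/-- Rank lemma: if each `v_j = ∑_{ℓ ∈ B_j} ι_j(ℓ) e_ℓ` is a nonempty `±1`-signed sum over a
linearly independent family `(e_ℓ)_{ℓ∈L}`, and each `ℓ ∈ L` belongs to at most two of the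
sets `B_j`, then the span of `{v_j : j ∈ J}` has dimension at least `(#J)/2`. -/
theorem stmt13 (V : Type*) [AddCommGroup V] [Module ℝ V]
    (L J : Type*) [Fintype L] [Fintype J] [DecidableEq L]
    (e : L → V) (he : LinearIndependent ℝ e)
    (B : J → Finset L) (hB : ∀ j, (B j).Nonempty)
    (ι : J → L → ℝ) (hι : ∀ j, ∀ ℓ ∈ B j, ι j ℓ = 1 ∨ ι j ℓ = -1)
    (hcount : ∀ ℓ : L, (Finset.univ.filter fun j => ℓ ∈ B j).card ≤ 2) :
    Fintype.card J ≤ 2 * Module.finrank ℝ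
      (Submodule.span ℝ (Set.range fun j => ∑ ℓ ∈ B j, ι j ℓ • e ℓ)) := by
  classical
  set v : J → V := fun j => ∑ ℓ ∈ B j, ι j ℓ • e ℓ with hv
  suffices h : ∀ S : Finset J, S.card ≤ 2 * Module.finrank ℝ (Submodule.span ℝ (v '' S)) by
    have hu := h Finset.univ
    rwa [Finset.coe_univ, Set.image_univ] at hu
  intro S
  induction S using Finset.strongInduction with
  | _ S IH =>
  by_cases hind : LinearIndependent ℝ (fun j : S => v j)
  · have himg : v '' ↑S = Set.range (fun j : S => v j) := Set.image_eq_range v ↑S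
    rw [himg, finrank_span_eq_card hind, Fintype.card_coe]
    omega
  · -- choose a nonzero relation with minimal support
    have hex : ∃ n : ℕ, ∃ h : J → ℝ, (∑ j, h j • v j = 0) ∧ (∀ j, h j ≠ 0 → j ∈ S) ∧
        (∃ j, h j ≠ 0) ∧ (Finset.univ.filter fun j => h j ≠ 0).card = n := by
      obtain ⟨h, h1, h2, h3⟩ := exists_relation_of_not_linearIndependent v S hind
      exact ⟨_, h, h1, h2, h3, rfl⟩
    obtain ⟨h, hrel, hsupS, ⟨j₁, hj₁⟩, hcard⟩ := Nat.find_spec hex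
    set n₀ := Nat.find hex with hn₀
    set T : Finset J := Finset.univ.filter fun j => h j ≠ 0 with hT
    have hTS : T ⊆ S := fun j hj => hsupS j (by simpa [hT] using hj)
    have hj₁T : j₁ ∈ T := by simp [hT, hj₁]
    -- the coefficient of each e ℓ in the relation vanishes
    have expand : ∑ j, h j • v j =
        ∑ ℓ, (∑ j, (if ℓ ∈ B j then h j * ι j ℓ else 0)) • e ℓ := by
      calc ∑ j, h j • v j
          = ∑ j : J, ∑ ℓ : L, (if ℓ ∈ B j then (h j * ι j ℓ) • e ℓ else 0) := by
            refine Finset.sum_congr rfl fun j _ => ?_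
            rw [Finset.sum_ite_mem, Finset.univ_inter, hv, Finset.smul_sum]
            exact Finset.sum_congr rfl fun ℓ _ => smul_smul _ _ _
        _ = ∑ ℓ : L, (∑ j, (if ℓ ∈ B j then h j * ι j ℓ else 0)) • e ℓ := by
            rw [Finset.sum_comm]
            refine Finset.sum_congr rfl fun ℓ _ => ?_
            rw [Finset.sum_smul]
            refine Finset.sum_congr rfl fun j _ => ?_
            split <;> simp
    have hcoef : ∀ ℓ : L, ∑ j, (if ℓ ∈ B j then h j * ι j ℓ else 0) = 0 :=
      Fintype.linearIndependent_iff.mp he _ (by rw [← expand, hrel])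
    -- saturation: every column meeting T has both its (two) occurrences inside T
    have hF2 : ∀ j₀ ∈ T, ∀ ℓ ∈ B j₀,
        2 ≤ (Finset.univ.filter fun j => ℓ ∈ B j ∧ h j ≠ 0).card := by
      intro j₀ hj₀ ℓ hℓ
      have hj₀ne : h j₀ ≠ 0 := by simpa [hT] using hj₀
      set F := Finset.univ.filter fun j => ℓ ∈ B j ∧ h j ≠ 0 with hF
      have hj₀F : j₀ ∈ F := by simp [hF, hℓ, hj₀ne]
      by_contra hlt
      push_neg at hlt
      have hcard1 : F.card = 1 := le_antisymm (by omega) (Finset.card_pos.2 ⟨j₀, hj₀F⟩)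
      have hFs : F = {j₀} := by
        rw [Finset.eq_singleton_iff_unique_mem]
        exact ⟨hj₀F, fun x hx => by
          have := Finset.card_le_one.mp (le_of_eq hcard1) x hx j₀ hj₀F
          exact this⟩
      have hsum : ∑ j, (if ℓ ∈ B j then h j * ι j ℓ else 0)
          = ∑ j ∈ F, (if ℓ ∈ B j then h j * ι j ℓ else 0) := by
        refine (Finset.sum_subset (Finset.subset_univ F) fun x _ hx => ?_).symm
        by_cases hxB : ℓ ∈ B x
        · have : h x = 0 := by
            by_contra hne
            exact hx (by simp [hF, hxB, hne])
          simp [hxB, this]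
        · simp [hxB]
      rw [hcoef ℓ, hFs, Finset.sum_singleton, if_pos hℓ] at hsum
      rcases hι j₀ ℓ hℓ with h1 | h1 <;> rw [h1] at hsum <;>
        simp_all
    have hsat : ∀ ℓ : L, ∀ j₀ ∈ T, ℓ ∈ B j₀ → ∀ j', ℓ ∈ B j' → j' ∈ T := by
      intro ℓ j₀ hj₀ hℓ j' hj'
      have hsub : (Finset.univ.filter fun j => ℓ ∈ B j ∧ h j ≠ 0) ⊆
          (Finset.univ.filter fun j => ℓ ∈ B j) := by
        intro x hx
        simp only [Finset.mem_filter] at hx ⊢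
        exact ⟨hx.1, hx.2.1⟩
      have heq := Finset.eq_of_subset_of_card_le hsub ((hcount ℓ).trans (hF2 j₀ hj₀ ℓ hℓ))
      have : j' ∈ (Finset.univ.filter fun j => ℓ ∈ B j ∧ h j ≠ 0) := by
        rw [heq]; simp [hj']
      simp only [Finset.mem_filter] at this
      simp [hT, this.2.2]
    have hT2 : 2 ≤ T.card := by
      obtain ⟨ℓ, hℓ⟩ := hB j₁
      refine le_trans (hF2 j₁ hj₁T ℓ hℓ) (Finset.card_le_card ?_)
      intro x hx
      simp only [Finset.mem_filter] at hx
      simp [hT, hx.2.2]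
    -- the family on T minus one element is linearly independent (minimality)
    have hTcard : T.card = n₀ := hcard
    have herase : LinearIndependent ℝ (fun j : (T.erase j₁) => v j) := by
      by_contra hne
      obtain ⟨h', h'rel, h'sup, j', hj'⟩ :=
        exists_relation_of_not_linearIndependent v (T.erase j₁) hne
      have hsub : (Finset.univ.filter fun j => h' j ≠ 0) ⊆ T.erase j₁ := by
        intro j hj
        exact h'sup j (by simpa using hj)
      have hlt : (Finset.univ.filter fun j => h' j ≠ 0).card < n₀ := by
        have h1 : (Finset.univ.filter fun j => h' j ≠ 0).card ≤ (T.erase j₁).card :=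
          Finset.card_le_card hsub
        have h2 : (T.erase j₁).card = T.card - 1 := Finset.card_erase_of_mem hj₁T
        omega
      exact Nat.find_min hex hlt ⟨h', h'rel,
        fun j hj => hTS (Finset.erase_subset _ _ (hsub (by simp [hj]))),
        ⟨j', hj'⟩, rfl⟩
    -- split the span into the T part and the rest
    set Lt : Finset L := T.biUnion B with hLt
    set A := Submodule.span ℝ (v '' ↑T) with hA
    set C := Submodule.span ℝ (v '' ↑(S \ T)) with hC
    have hA_le : A ≤ Submodule.span ℝ (e '' (↑Lt : Set L)) := by
      rw [hA, Submodule.span_le]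
      rintro _ ⟨j, hj, rfl⟩
      refine Submodule.sum_mem _ fun ℓ hℓ => Submodule.smul_mem _ _ (Submodule.subset_span ?_)
      exact ⟨ℓ, by simpa [hLt] using Finset.mem_biUnion.2 ⟨j, hj, hℓ⟩, rfl⟩
    have hC_le : C ≤ Submodule.span ℝ (e '' (↑Lt : Set L)ᶜ) := by
      rw [hC, Submodule.span_le]
      rintro _ ⟨j, hj, rfl⟩
      refine Submodule.sum_mem _ fun ℓ hℓ => Submodule.smul_mem _ _ (Submodule.subset_span ?_)
      refine ⟨ℓ, ?_, rfl⟩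
      simp only [Set.mem_compl_iff, Finset.mem_coe, hLt, Finset.mem_biUnion]
      rintro ⟨j₀, hj₀, hℓ₀⟩
      have hjT : j ∈ T := hsat ℓ j₀ hj₀ hℓ₀ j hℓ
      rw [Finset.mem_coe, Finset.mem_sdiff] at hj
      exact hj.2 hjT
    have hAC : Disjoint A C :=
      Disjoint.mono hA_le hC_le (he.disjoint_span_image disjoint_compl_right)
    have hsplit : Submodule.span ℝ (v '' ↑S) = A ⊔ C := by
      rw [hA, hC, ← Submodule.span_union, ← Set.image_union]
      congr 1
      rw [← Finset.coe_union, Finset.union_sdiff_of_subset hTS]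
    haveI : FiniteDimensional ℝ A :=
      FiniteDimensional.span_of_finite ℝ ((T.finite_toSet).image v)
    haveI : FiniteDimensional ℝ C :=
      FiniteDimensional.span_of_finite ℝ (((S \ T).finite_toSet).image v)
    have hrankadd : finrank ℝ (A ⊔ C : Submodule ℝ V) = finrank ℝ A + finrank ℝ C := by
      have := Submodule.finrank_sup_add_finrank_inf_eq A C
      rw [hAC.eq_bot, finrank_bot] at this
      omega
    have hrankA : T.card - 1 ≤ finrank ℝ A := by
      have h1 : finrank ℝ (Submodule.span ℝ (v '' ↑(T.erase j₁))) = (T.erase j₁).card := by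
        have himg2 : v '' ↑(T.erase j₁) = Set.range (fun j : (T.erase j₁) => v j) :=
          Set.image_eq_range v ↑(T.erase j₁)
        rw [himg2, finrank_span_eq_card herase, Fintype.card_coe]
      have h2 : Submodule.span ℝ (v '' ↑(T.erase j₁)) ≤ A :=
        Submodule.span_mono (Set.image_mono (f := v) (by exact_mod_cast Finset.erase_subset j₁ T))
      have := Submodule.finrank_mono h2
      rw [h1, Finset.card_erase_of_mem hj₁T] at this
      exact this
    have hIH : (S \ T).card ≤ 2 * finrank ℝ C :=
      IH (S \ T) (Finset.sdiff_ssubset hTS ⟨j₁, hj₁T⟩)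
    have hScard : (S \ T).card + T.card = S.card := Finset.card_sdiff_add_card_eq_card hTS
    rw [hsplit, hrankadd]
    omega
end

section
/- Let V be a real vector space, E a finite set, σ : E → E an involution without fixed points, and v : E → V a map with v(σ(ℓ)) = −v(ℓ) for all ℓ ∈ E, such that for some (equivalently, every) subset E₊ ⊆ E containing exactly one element from each orbit {ℓ, σ(ℓ)}, the family (v(ℓ))_{ℓ∈E₊} is linearly independent. Let A ⊆ E, set s := ∑_{ℓ∈A} v(ℓ), and let F ⊆ A. If s lies in the linear span of {v(ℓ) : ℓ ∈ F}, then s = ∑_{ℓ ∈ F, σ(ℓ) ∉ A} v(ℓ), and the cardinality of {ℓ ∈ F : σ(ℓ) ∉ A} has the same parity as the cardinality of A. -/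
/-- Root-momentum lemma: let `σ` be a fixed-point-free involution of a finite set `E`,
`v : E → V` with `v(σℓ) = −v(ℓ)`, such that `(v(ℓ))_{ℓ∈E₊}` is linearly independent for a
set `E₊` containing exactly one element of each `σ`-orbit. If `s = ∑_{ℓ∈A} v(ℓ)` lies in
the span of `{v(ℓ) : ℓ ∈ F}` for some `F ⊆ A`, then `s = ∑_{ℓ∈F, σ(ℓ)∉A} v(ℓ)` and
`#{ℓ ∈ F : σ(ℓ) ∉ A}` has the same parity as `#A`. -/
theorem stmt14 (V : Type*) [AddCommGroup V] [Module ℝ V]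
    (E : Type*) [Fintype E] [DecidableEq E]
    (σ : E → E) (hinv : Function.Involutive σ) (hfix : ∀ ℓ, σ ℓ ≠ ℓ)
    (v : E → V) (hv : ∀ ℓ, v (σ ℓ) = -v ℓ)
    (Ep : Set E) (hEp : ∀ ℓ, ℓ ∈ Ep ↔ σ ℓ ∉ Ep)
    (hLI : LinearIndependent ℝ fun ℓ : Ep => v ℓ)
    (A F : Finset E) (hFA : F ⊆ A)
    (hspan : (∑ ℓ ∈ A, v ℓ) ∈ Submodule.span ℝ (v '' ↑F)) :
    (∑ ℓ ∈ A, v ℓ) = (∑ ℓ ∈ F.filter fun ℓ => σ ℓ ∉ A, v ℓ) ∧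
    (F.filter fun ℓ => σ ℓ ∉ A).card % 2 = A.card % 2 := by
  classical
  set B : Finset E := A.filter (fun ℓ => σ ℓ ∉ A) with hB
  -- the σ-paired part of A sums to zero
  have hzero : ∑ ℓ ∈ A.filter (fun ℓ => σ ℓ ∈ A), v ℓ = 0 := by
    refine Finset.sum_involution (fun a _ => σ a) ?_ ?_ ?_ ?_
    · intro a _; rw [hv]; abel
    · intro a _ _; exact fun h => hfix a h
    · intro a ha
      simp only [Finset.mem_filter] at ha ⊢
      exact ⟨ha.2, by rw [hinv a]; exact ha.1⟩
    · intro a _; exact hinv a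
  have hsB : ∑ ℓ ∈ A, v ℓ = ∑ ℓ ∈ B, v ℓ := by
    rw [← Finset.sum_filter_add_sum_filter_not A (fun ℓ => σ ℓ ∉ A)]
    have : A.filter (fun ℓ => ¬ σ ℓ ∉ A) = A.filter (fun ℓ => σ ℓ ∈ A) := by
      apply Finset.filter_congr; intro x _; simp
    rw [this, hzero, add_zero]
  -- key step : B ⊆ F
  have hBF : B ⊆ F := by
    intro ℓ₀ hℓ₀
    by_contra hnF
    rw [hB, Finset.mem_filter] at hℓ₀
    obtain ⟨hℓ₀A, hσℓ₀A⟩ := hℓ₀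
    set T : Set Ep := {p : Ep | (p : E) ≠ ℓ₀ ∧ (p : E) ≠ σ ℓ₀} with hT
    set M : Submodule ℝ V := Submodule.span ℝ ((fun p : Ep => v ↑p) '' T) with hM
    -- any v ℓ with ℓ ∉ {ℓ₀, σ ℓ₀} lies in M
    have hmemM : ∀ ℓ : E, ℓ ≠ ℓ₀ → ℓ ≠ σ ℓ₀ → v ℓ ∈ M := by
      intro ℓ h1 h2
      by_cases hc : ℓ ∈ Ep
      · have hTmem : (⟨ℓ, hc⟩ : Ep) ∈ T := ⟨h1, h2⟩
        exact Submodule.subset_span ⟨⟨ℓ, hc⟩, hTmem, rfl⟩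
      · have hσc : σ ℓ ∈ Ep := by
          by_contra h
          exact hc ((hEp ℓ).2 h)
        have hTmem : (⟨σ ℓ, hσc⟩ : Ep) ∈ T := by
          constructor
          · intro h
            apply h2
            have := congrArg σ h
            rwa [hinv ℓ] at this
          · intro h
            exact h1 (hinv.injective h)
        have : v (σ ℓ) ∈ M := Submodule.subset_span ⟨⟨σ ℓ, hσc⟩, hTmem, rfl⟩
        rw [hv ℓ] at this
        have := M.neg_mem this
        rwa [neg_neg] at this
    -- span of v '' F is inside M
    have hFM : Submodule.span ℝ (v '' ↑F) ≤ M := by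
      rw [Submodule.span_le]
      rintro x ⟨ℓ, hℓF, rfl⟩
      refine hmemM ℓ (fun h => hnF (h ▸ hℓF)) (fun h => hσℓ₀A (hFA (h ▸ hℓF)))
    -- v ℓ₀ ∈ M
    have hvℓ₀ : v ℓ₀ ∈ M := by
      have hsum : v ℓ₀ = (∑ ℓ ∈ A, v ℓ) - ∑ ℓ ∈ B.erase ℓ₀, v ℓ := by
        rw [hsB, ← Finset.add_sum_erase B v (by rw [hB, Finset.mem_filter]; exact ⟨hℓ₀A, hσℓ₀A⟩)]
        abel
      rw [hsum]
      refine M.sub_mem (hFM hspan) (Submodule.sum_mem M fun ℓ hℓ => ?_)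
      have hℓB := Finset.mem_of_mem_erase hℓ
      rw [hB, Finset.mem_filter] at hℓB
      exact hmemM ℓ (Finset.ne_of_mem_erase hℓ) (fun h => hσℓ₀A (h ▸ hℓB.1))
    -- contradiction with linear independence
    by_cases hc : ℓ₀ ∈ Ep
    · have hnT : (⟨ℓ₀, hc⟩ : Ep) ∉ T := fun h => h.1 rfl
      exact hLI.notMem_span_image hnT hvℓ₀
    · have hσc : σ ℓ₀ ∈ Ep := by
        by_contra h
        exact hc ((hEp ℓ₀).2 h)
      have hnT : (⟨σ ℓ₀, hσc⟩ : Ep) ∉ T := fun h => h.2 rfl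
      refine hLI.notMem_span_image hnT ?_
      show v (σ ℓ₀) ∈ M
      rw [hv ℓ₀]
      exact M.neg_mem hvℓ₀
  -- B equals the filtered F
  have hBeq : F.filter (fun ℓ => σ ℓ ∉ A) = B := by
    apply Finset.Subset.antisymm
    · intro ℓ hℓ
      rw [Finset.mem_filter] at hℓ
      rw [hB, Finset.mem_filter]
      exact ⟨hFA hℓ.1, hℓ.2⟩
    · intro ℓ hℓ
      have hℓ' := hℓ
      rw [hB, Finset.mem_filter] at hℓ'
      rw [Finset.mem_filter]
      exact ⟨hBF hℓ, hℓ'.2⟩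
  constructor
  · rw [hBeq, hsB]
  · -- parity
    rw [hBeq]
    rw [← ZMod.natCast_eq_natCast_iff' B.card A.card 2]
    have hcard : A.card = (A.filter (fun ℓ => σ ℓ ∈ A)).card + B.card := by
      rw [hB]
      have := Finset.card_filter_add_card_filter_not (s := A)
        (p := fun ℓ => σ ℓ ∈ A)
      omega
    have heven : ((A.filter (fun ℓ => σ ℓ ∈ A)).card : ZMod 2) = 0 := by
      have : ∑ _ℓ ∈ A.filter (fun ℓ => σ ℓ ∈ A), (1 : ZMod 2) = 0 := by
        refine Finset.sum_involution (fun a _ => σ a) ?_ ?_ ?_ ?_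
        · intro a _; decide
        · intro a _ _; exact fun h => hfix a h
        · intro a ha
          simp only [Finset.mem_filter] at ha ⊢
          exact ⟨ha.2, by rw [hinv a]; exact ha.1⟩
        · intro a _; exact hinv a
      simpa using this
    rw [hcard]
    push_cast
    rw [heven, zero_add]
end
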